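/- Let ω := (−1 + i√3)/2 ∈ ℂ and let ℤ[ω] := {a + bω : a,b ∈ ℤ} be the ring of Eisenstein integers. For α,β ∈ ℂ write n(α,β) for the 3×3 complex matrix with rows (1, α, β), (0, 1, conj(α)), (0, 0, 1), where conj denotes complex conjugation. Set T₁ := n(1, −ω) and T₂ := n(ω, −ω). Then the subgroup of GL(3,ℂ) generated by {T₁, T₂} is exactly the set N(𝒪_K) := { n(α,β) : α, β ∈ ℤ[ω], β + conj(β) = α·conj(α) }. -/

import Mathlib

open Complex

noncomputable section

/-- The primitive cube root of unity `ω = (−1 + i√3)/2`. -/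
def ω : ℂ := (-1 + Complex.I * Real.sqrt 3) / 2

/-- A complex number is an Eisenstein integer if it lies in `ℤ + ℤω`. -/
def IsEisenstein (z : ℂ) : Prop := ∃ a b : ℤ, z = (a : ℂ) + (b : ℂ) * ω

/-- The unipotent matrix `n(α,β)` with rows `(1,α,β)`, `(0,1,conj α)`, `(0,0,1)`. -/
def nmat (α β : ℂ) : Matrix (Fin 3) (Fin 3) ℂ :=
  !![1, α, β; 0, 1, (starRingEnd ℂ) α; 0, 0, 1]

/-!
The map `n(α, β) ↦ α` turns `N(𝒪_K)` into an extension of `ℤ[ω]` by the central subgroup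
`{n(0, γ) : γ ∈ ℤ[ω], γ + conj γ = 0} = {n(0, m√−3) : m ∈ ℤ}`. Both generators lie in
`N(𝒪_K)`, and their first coordinates `1` and `ω` span `ℤ[ω]`, so every first coordinate is
reached. Their commutator is `n(0, −√−3)` with `√−3 = 1 + 2ω`, so the whole centre is reached
as well, and the two facts together give every element of `N(𝒪_K)`.
-/

lemma conj_ω : (starRingEnd ℂ) ω = -1 - ω := by
  simp only [ω, map_div₀, map_add, map_mul, map_neg, map_one, conj_I, conj_ofReal, conj_ofNat]
  field_simp
  ring

lemma ω_mul_self : ω * ω = -1 - ω := by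
  have h3 : ((Real.sqrt 3 : ℝ) : ℂ) * ((Real.sqrt 3 : ℝ) : ℂ) = 3 := by
    rw [← ofReal_mul, Real.mul_self_sqrt] <;> norm_num
  simp only [ω]
  field_simp
  linear_combination I ^ 2 * h3 + 3 * I_sq

lemma isEisenstein_zero : IsEisenstein 0 := ⟨0, 0, by push_cast; ring⟩

lemma isEisenstein_one : IsEisenstein 1 := ⟨1, 0, by push_cast; ring⟩

lemma isEisenstein_ω : IsEisenstein ω := ⟨0, 1, by push_cast; ring⟩

section EisensteinIntegers

variable {z w : ℂ}

lemma IsEisenstein.add (hz : IsEisenstein z) (hw : IsEisenstein w) : IsEisenstein (z + w) := by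
  obtain ⟨a, b, rfl⟩ := hz
  obtain ⟨c, d, rfl⟩ := hw
  exact ⟨a + c, b + d, by push_cast; ring⟩

lemma IsEisenstein.neg (hz : IsEisenstein z) : IsEisenstein (-z) := by
  obtain ⟨a, b, rfl⟩ := hz
  exact ⟨-a, -b, by push_cast; ring⟩

lemma IsEisenstein.sub (hz : IsEisenstein z) (hw : IsEisenstein w) : IsEisenstein (z - w) :=
  sub_eq_add_neg z w ▸ hz.add hw.neg

lemma IsEisenstein.mul (hz : IsEisenstein z) (hw : IsEisenstein w) : IsEisenstein (z * w) := by
  obtain ⟨a, b, rfl⟩ := hz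
  obtain ⟨c, d, rfl⟩ := hw
  exact ⟨a * c - b * d, a * d + b * c - b * d, by
    push_cast; linear_combination (b : ℂ) * d * ω_mul_self⟩

lemma IsEisenstein.conj (hz : IsEisenstein z) : IsEisenstein ((starRingEnd ℂ) z) := by
  obtain ⟨a, b, rfl⟩ := hz
  exact ⟨a - b, -b, by simp only [map_add, map_mul, map_intCast, conj_ω]; push_cast; ring⟩

lemma IsEisenstein.mem_of_one_mem_of_ω_mem {A : AddSubgroup ℂ} (h1 : (1 : ℂ) ∈ A)
    (hω : ω ∈ A) (hz : IsEisenstein z) : z ∈ A := by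
  obtain ⟨a, b, rfl⟩ := hz
  simpa [zsmul_eq_mul] using add_mem (zsmul_mem h1 a) (zsmul_mem hω b)

lemma IsEisenstein.exists_eq_intCast_mul_of_add_conj_eq_zero (hz : IsEisenstein z)
    (h : z + (starRingEnd ℂ) z = 0) : ∃ m : ℤ, z = m * (1 + 2 * ω) := by
  obtain ⟨a, b, rfl⟩ := hz
  have hre : ((2 * a - b : ℤ) : ℂ) = 0 := by
    simp only [map_add, map_mul, map_intCast, conj_ω] at h
    push_cast
    linear_combination h
  have hb : b = 2 * a := by
    have := Int.cast_eq_zero.mp hre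
    omega
  exact ⟨a, by subst hb; push_cast; ring⟩

end EisensteinIntegers

lemma nmat_mul (α β α' β' : ℂ) :
    nmat α β * nmat α' β' = nmat (α + α') (β + β' + α * (starRingEnd ℂ) α') := by
  ext i j
  fin_cases i <;> fin_cases j <;> simp [nmat] <;> ring

lemma nmat_zero_zero : nmat 0 0 = 1 := by
  rw [nmat, map_zero, Matrix.one_fin_three]

lemma nmat_injective : Function.Injective2 nmat := fun _ _ _ _ h =>
  ⟨by simpa [nmat] using congrFun (congrFun h 0) 1, by simpa [nmat] using congrFun (congrFun h 0) 2⟩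

local notation "GL₃" => Matrix.GeneralLinearGroup (Fin 3) ℂ

def nunit (α β : ℂ) : GL₃ where
  val := nmat α β
  inv := nmat (-α) (α * (starRingEnd ℂ) α - β)
  val_inv := by rw [nmat_mul, map_neg, ← nmat_zero_zero]; congr 1 <;> ring
  inv_val := by rw [nmat_mul, ← nmat_zero_zero]; congr 1 <;> ring

lemma coe_nunit (α β : ℂ) : (nunit α β : Matrix (Fin 3) (Fin 3) ℂ) = nmat α β := rfl

lemma eq_nunit {x : GL₃} {α β : ℂ} (h : (x : Matrix (Fin 3) (Fin 3) ℂ) = nmat α β) :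
    x = nunit α β :=
  Units.ext h

lemma nunit_mul (α β α' β' : ℂ) :
    nunit α β * nunit α' β' = nunit (α + α') (β + β' + α * (starRingEnd ℂ) α') :=
  Units.ext (nmat_mul α β α' β')

lemma nunit_inv (α β : ℂ) : (nunit α β)⁻¹ = nunit (-α) (α * (starRingEnd ℂ) α - β) :=
  Units.ext rfl

lemma nunit_zero_zero : nunit 0 0 = 1 := Units.ext nmat_zero_zero

/-- The group `N(𝒪_K)`. -/
def eisensteinUnipotent : Subgroup GL₃ where
  carrier := {x | ∃ α β : ℂ, IsEisenstein α ∧ IsEisenstein β ∧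
      β + (starRingEnd ℂ) β = α * (starRingEnd ℂ) α ∧
      (x : Matrix (Fin 3) (Fin 3) ℂ) = nmat α β}
  one_mem' := ⟨0, 0, isEisenstein_zero, isEisenstein_zero, by simp,
    nmat_zero_zero.symm⟩
  mul_mem' := by
    rintro x y ⟨α, β, hα, hβ, ht, hx⟩ ⟨α', β', hα', hβ', ht', hy⟩
    refine ⟨α + α', β + β' + α * (starRingEnd ℂ) α', hα.add hα',
      (hβ.add hβ').add (hα.mul hα'.conj), ?_, ?_⟩
    · simp only [map_add, map_mul, conj_conj]
      linear_combination ht + ht'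
    · rw [Units.val_mul, hx, hy, nmat_mul]
  inv_mem' := by
    rintro x ⟨α, β, hα, hβ, ht, hx⟩
    refine ⟨-α, (starRingEnd ℂ) β, hα.neg, hβ.conj, ?_, ?_⟩
    · simp only [map_neg, conj_conj]
      linear_combination ht
    · rw [eq_nunit hx, nunit_inv, coe_nunit]
      congr 1
      linear_combination -ht

lemma nunit_mem_eisensteinUnipotent_iff {α β : ℂ} :
    nunit α β ∈ eisensteinUnipotent ↔ IsEisenstein α ∧ IsEisenstein β ∧
      β + (starRingEnd ℂ) β = α * (starRingEnd ℂ) α := by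
  constructor
  · rintro ⟨α', β', hα', hβ', ht', h⟩
    obtain ⟨rfl, rfl⟩ := nmat_injective h
    exact ⟨hα', hβ', ht'⟩
  · rintro ⟨hα, hβ, ht⟩
    exact ⟨α, β, hα, hβ, ht, rfl⟩

section Coordinates

variable (G : Subgroup GL₃)

def firstCoordinates : AddSubgroup ℂ where
  carrier := {α | ∃ β, nunit α β ∈ G}
  zero_mem' := ⟨0, by rw [nunit_zero_zero]; exact one_mem G⟩
  add_mem' := by
    rintro α α' ⟨β, hβ⟩ ⟨β', hβ'⟩
    exact ⟨_, nunit_mul α β α' β' ▸ mul_mem hβ hβ'⟩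
  neg_mem' := by
    rintro α ⟨β, hβ⟩
    exact ⟨_, nunit_inv α β ▸ inv_mem hβ⟩

def centreCoordinates : AddSubgroup ℂ where
  carrier := {γ | nunit 0 γ ∈ G}
  zero_mem' := by
    change nunit 0 0 ∈ G
    rw [nunit_zero_zero]
    exact one_mem G
  add_mem' := by
    intro γ γ' (hγ : nunit 0 γ ∈ G) (hγ' : nunit 0 γ' ∈ G)
    have := mul_mem hγ hγ'
    rwa [nunit_mul, zero_add, map_zero, mul_zero, add_zero] at this
  neg_mem' := by
    intro γ (hγ : nunit 0 γ ∈ G)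
    have := inv_mem hγ
    rwa [nunit_inv, neg_zero, zero_mul, zero_sub] at this

variable {G}

lemma mem_centreCoordinates {γ : ℂ} : γ ∈ centreCoordinates G ↔ nunit 0 γ ∈ G := Iff.rfl

lemma nunit_mem_of_sub_mem_centreCoordinates {α β β' : ℂ} (h : nunit α β ∈ G)
    (h' : β' - β ∈ centreCoordinates G) : nunit α β' ∈ G := by
  have := mul_mem h h'
  rwa [nunit_mul, add_zero, map_zero, mul_zero, add_zero, add_sub_cancel] at this

lemma neg_one_add_two_mul_ω_mem_centreCoordinates (h₁ : nunit 1 (-ω) ∈ G)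
    (h₂ : nunit ω (-ω) ∈ G) : -(1 + 2 * ω) ∈ centreCoordinates G := by
  have hcomm : nunit 1 (-ω) * nunit ω (-ω) * (nunit 1 (-ω))⁻¹ * (nunit ω (-ω))⁻¹ =
      nunit 0 (-(1 + 2 * ω)) := by
    rw [nunit_inv, nunit_inv, nunit_mul, nunit_mul, nunit_mul]
    congr 1
    · ring
    · simp only [map_neg, map_one, conj_ω]
      ring
  rw [mem_centreCoordinates, ← hcomm]
  exact mul_mem (mul_mem (mul_mem h₁ h₂) (inv_mem h₁)) (inv_mem h₂)

lemma eisensteinUnipotent_le_of_mem (h₁ : nunit 1 (-ω) ∈ G) (h₂ : nunit ω (-ω) ∈ G)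
    (hG : G ≤ eisensteinUnipotent) : eisensteinUnipotent ≤ G := by
  rintro x ⟨α, β, hα, hβ, ht, hx⟩
  obtain ⟨β₀, hβ₀⟩ := hα.mem_of_one_mem_of_ω_mem (A := firstCoordinates G) ⟨_, h₁⟩ ⟨_, h₂⟩
  obtain ⟨-, hβ₀', ht₀⟩ := nunit_mem_eisensteinUnipotent_iff.1 (hG hβ₀)
  obtain ⟨m, hm⟩ := (hβ.sub hβ₀').exists_eq_intCast_mul_of_add_conj_eq_zero
    (by rw [map_sub]; linear_combination ht - ht₀)
  rw [eq_nunit hx]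
  refine nunit_mem_of_sub_mem_centreCoordinates hβ₀ ?_
  rw [hm, ← zsmul_eq_mul, ← neg_neg (1 + 2 * ω)]
  exact zsmul_mem (neg_mem (neg_one_add_two_mul_ω_mem_centreCoordinates h₁ h₂)) m

end Coordinates

/-- The generators `T₁ = n(1, −ω)` and `T₂ = n(ω, −ω)`. -/
def generators : Set GL₃ :=
  {x | (x : Matrix (Fin 3) (Fin 3) ℂ) = nmat 1 (-ω) ∨ (x : Matrix (Fin 3) (Fin 3) ℂ) = nmat ω (-ω)}

lemma generators_subset_eisensteinUnipotent : generators ⊆ eisensteinUnipotent := by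
  rintro x (hx | hx) <;> rw [SetLike.mem_coe, eq_nunit hx, nunit_mem_eisensteinUnipotent_iff]
  · exact ⟨isEisenstein_one, isEisenstein_ω.neg, by rw [map_neg, conj_ω, map_one]; ring⟩
  · exact ⟨isEisenstein_ω, isEisenstein_ω.neg, by
      rw [map_neg, conj_ω]; linear_combination ω_mul_self⟩

/-- **Theorem 3.1.** The subgroup of `GL(3,ℂ)` generated by
`T₁ = n(1,−ω)` and `T₂ = n(ω,−ω)` is exactly
`N(𝒪_K) = { n(α,β) : α,β ∈ ℤ[ω], β + conj β = α·conj α }`. -/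
theorem statement14 :
    ((Subgroup.closure {x : Matrix.GeneralLinearGroup (Fin 3) ℂ |
        (x : Matrix (Fin 3) (Fin 3) ℂ) = nmat 1 (-ω) ∨
        (x : Matrix (Fin 3) (Fin 3) ℂ) = nmat ω (-ω)} :
      Subgroup (Matrix.GeneralLinearGroup (Fin 3) ℂ)) : Set (Matrix.GeneralLinearGroup (Fin 3) ℂ)) =
    {x : Matrix.GeneralLinearGroup (Fin 3) ℂ | ∃ α β : ℂ,
      IsEisenstein α ∧ IsEisenstein β ∧
      β + (starRingEnd ℂ) β = α * (starRingEnd ℂ) α ∧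
      (x : Matrix (Fin 3) (Fin 3) ℂ) = nmat α β} := by
  change ((Subgroup.closure generators : Subgroup GL₃) : Set GL₃) = eisensteinUnipotent
  have hT₁ : nunit 1 (-ω) ∈ Subgroup.closure generators := Subgroup.subset_closure (Or.inl rfl)
  have hT₂ : nunit ω (-ω) ∈ Subgroup.closure generators := Subgroup.subset_closure (Or.inr rfl)
  have hle : Subgroup.closure generators ≤ eisensteinUnipotent :=
    (Subgroup.closure_le _).2 generators_subset_eisensteinUnipotent
  exact congrArg _ (hle.antisymm (eisensteinUnipotent_le_of_mem hT₁ hT₂ hle))
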